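/- The 5-dimensional Leibniz algebras L(0,0,1) (nonzero products [e₀,e₀]=e₂, [e₂,e₀]=e₃, [e₃,e₀]=e₄, [e₁,e₁]=e₄) and L(0,1,0) (nonzero products [e₀,e₀]=e₂, [e₂,e₀]=e₃, [e₃,e₀]=e₄, [e₀,e₁]=e₄) are not isomorphic. -/

import Mathlib

/-- The bracket of the algebra `L(0,0,1)` in `SLeib₅`. -/
def brL001 (x y : Fin 5 → ℂ) : Fin 5 → ℂ :=
  ![0, 0, x 0 * y 0, x 2 * y 0, x 3 * y 0 + x 1 * y 1]

/-- The bracket of the algebra `L(0,1,0)` in `SLeib₅`. -/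
def brL010 (x y : Fin 5 → ℂ) : Fin 5 → ℂ :=
  ![0, 0, x 0 * y 0, x 2 * y 0, x 3 * y 0 + x 0 * y 1]

/-!
In `L(0,0,1)` an element `x` with `[x, x] = 0` has `x₀ = x₁ = 0`, and then `[y, x] = 0` for every
`y`, because the bracket reads only the first two coordinates of its right argument. In `L(0,1,0)`
the element `e₁` squares to zero but `[e₀, e₁] = e₄`. An isomorphism would carry the first property
over to `L(0,1,0)`.
-/

def SquareZeroRightAnnihilates {M : Type*} [Zero M] (br : M → M → M) : Prop :=
  ∀ x, br x x = 0 → ∀ y, br y x = 0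

theorem SquareZeroRightAnnihilates.of_addEquiv {M N : Type*} [AddZeroClass M] [AddZeroClass N]
    {brM : M → M → M} {brN : N → N → N} (f : M ≃+ N)
    (hf : ∀ x y, f (brM x y) = brN (f x) (f y)) (h : SquareZeroRightAnnihilates brM) :
    SquareZeroRightAnnihilates brN := by
  intro x hx y
  have hsq : brM (f.symm x) (f.symm x) = 0 := by
    apply f.injective
    rw [hf, f.apply_symm_apply, hx, map_zero]
  have := hf (f.symm y) (f.symm x)
  rwa [h _ hsq, map_zero, f.apply_symm_apply, f.apply_symm_apply, eq_comm] at this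

theorem squareZeroRightAnnihilates_brL001 : SquareZeroRightAnnihilates brL001 := by
  intro x hx y
  have hx0 : x 0 = 0 := by simpa [brL001] using congrFun hx 2
  have hx1 : x 1 = 0 := by simpa [brL001, hx0] using congrFun hx 4
  funext i
  fin_cases i <;> simp [brL001, hx0, hx1]

theorem not_squareZeroRightAnnihilates_brL010 : ¬ SquareZeroRightAnnihilates brL010 := by
  intro h
  have hsq : brL010 ![0, 1, 0, 0, 0] ![0, 1, 0, 0, 0] = 0 := by
    funext i
    fin_cases i <;> simp [brL010]
  simpa [brL010] using congrFun (h _ hsq ![1, 0, 0, 0, 0]) 4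

/-- The algebras `L(0,0,1)` and `L(0,1,0)` are not isomorphic. -/
theorem L001_not_isomorphic_L010 :
    ¬ ∃ f : (Fin 5 → ℂ) ≃ₗ[ℂ] (Fin 5 → ℂ),
        ∀ x y : Fin 5 → ℂ, f (brL001 x y) = brL010 (f x) (f y) := by
  rintro ⟨f, hf⟩
  exact not_squareZeroRightAnnihilates_brL010
    (squareZeroRightAnnihilates_brL001.of_addEquiv f.toAddEquiv hf)
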